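/- arXiv:0907.3972 — 2 statements merged into one kernel-verified Lean document; each statement's English description precedes it below -/
import Mathlib

section
/- Let q = 2^r, λ the canonical additive character of F_q, b ∈ F_q such that the polynomial x²+x+b is irreducible over F_q (equivalently b ∉ {α²+α : α ∈ F_q}), and β ∈ F_q*. Then Σ_{α ∈ F_q} λ(β/(α²+α+b)) = −K(λ;β) − 1. -/
open Finset
open scoped Classical

noncomputable instance (p n : ℕ) [Fact p.Prime] : Fintype (GaloisField p n) :=
  Fintype.ofFinite _

/-- The canonical additive character of `𝔽_{2^r}`, valued in `{±1} ⊆ ℤ`: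
`λ(x) = (-1)^{tr(x)}` where `tr` is the absolute trace to `𝔽₂`. -/
noncomputable def lam (r : ℕ) (x : GaloisField 2 r) : ℤ :=
  if Algebra.trace (ZMod 2) (GaloisField 2 r) x = 0 then 1 else -1

/-- The Kloosterman sum `K(λ;β) = Σ_{x ∈ 𝔽_q*} λ(x + β x⁻¹)`. -/
noncomputable def Kl (r : ℕ) (β : GaloisField 2 r) : ℤ :=
  ∑ x ∈ (Finset.univ \ {0} : Finset (GaloisField 2 r)), lam r (x + β * x⁻¹)

section Aux

variable (r : ℕ)

local notation "F" => GaloisField 2 r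
local notation "tr" => Algebra.trace (ZMod 2) (GaloisField 2 r)

lemma lam_zero : lam r 0 = 1 := by simp [lam]

lemma lam_add (x y : F) : lam r (x + y) = lam r x * lam r y := by
  unfold lam
  rw [map_add]
  have hall : ∀ a : ZMod 2, a = 0 ∨ a = 1 := by decide
  rcases hall (tr x) with h1 | h1 <;> rcases hall (tr y) with h2 | h2 <;>
    rw [h1, h2] <;> norm_num <;> decide

lemma tr_sq (x : F) : tr (x ^ 2) = tr x := by
  have hsq : ∀ c : ZMod 2, c ^ 2 = c := by decide
  let e : F ≃ₐ[ZMod 2] F :=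
    { (frobeniusEquiv F 2 : F ≃+* F) with
      commutes' := fun c => by
        simp only [RingEquiv.toEquiv_eq_coe, Equiv.toFun_as_coe, EquivLike.coe_coe,
          frobeniusEquiv_apply, frobenius_def, ← map_pow, hsq] }
  have := Algebra.trace_eq_of_algEquiv e x
  simpa [e, frobenius_def] using this

lemma quad_solutions (α₀ α : F) (h : α ^ 2 + α = α₀ ^ 2 + α₀) : α = α₀ ∨ α = α₀ + 1 := by
  have h2 : (2 : F) = 0 := by
    have := CharP.cast_eq_zero F 2; exact_mod_cast this
  have hprod : (α + α₀) * (α + α₀ + 1) = 0 := by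
    linear_combination h + (α * α₀ + α₀ ^ 2 + α₀) * h2
  rcases mul_eq_zero.mp hprod with h' | h'
  · left; linear_combination h' - α₀ * h2
  · right; linear_combination h' - (α₀ + 1) * h2

lemma self_ne_add_one (α : F) : α ≠ α + 1 := by
  intro h
  exact (one_ne_zero : (1 : F) ≠ 0) (by linear_combination -h)

lemma fiber_card (c b : F) (α₀ : F) (h : α₀ ^ 2 + α₀ + b = c) :
    (univ.filter (fun α : F => α ^ 2 + α + b = c)).card = 2 := by
  have hset : (univ.filter (fun α : F => α ^ 2 + α + b = c)) = {α₀, α₀ + 1} := by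
    ext α
    simp only [mem_filter, mem_univ, true_and, mem_insert, mem_singleton]
    constructor
    · intro hα
      apply quad_solutions r α₀ α
      have : α ^ 2 + α + b = α₀ ^ 2 + α₀ + b := by rw [hα, h]
      exact add_right_cancel this
    · rintro (rfl | rfl)
      · exact h
      · have h2 : (2 : F) = 0 := by
          have := CharP.cast_eq_zero F 2; exact_mod_cast this
        linear_combination h + (α₀ + 1) * h2
  rw [hset, card_insert_of_notMem (by simp [self_ne_add_one r α₀]), card_singleton]

lemma two_eq_zero : (2 : F) = 0 := by
  have := CharP.cast_eq_zero F 2; exact_mod_cast this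

lemma tr_one_exists : ∃ e : F, tr e = 1 := Algebra.trace_surjective (ZMod 2) F 1

lemma card_tr : (univ.filter (fun x : F => tr x = 0)).card
    = (univ.filter (fun x : F => ¬ tr x = 0)).card := by
  obtain ⟨e, he⟩ := tr_one_exists r
  have h2 : (2 : F) = 0 := two_eq_zero r
  have hone : (1 : ZMod 2) ≠ 0 := by decide
  have hall : ∀ a : ZMod 2, a = 0 ∨ a = 1 := by decide
  apply Finset.card_bij' (fun x _ => x + e) (fun y _ => y + e)
  · intro x hx
    simp only [mem_filter, mem_univ, true_and] at hx ⊢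
    rw [map_add, hx, he, zero_add]
    exact hone
  · intro y hy
    simp only [mem_filter, mem_univ, true_and] at hy ⊢
    rcases hall (tr y) with h | h
    · exact absurd h hy
    · rw [map_add, h, he]; decide
  · intro x _; linear_combination e * h2
  · intro y _; linear_combination e * h2

lemma sum_lam : ∑ x : F, lam r x = 0 := by
  have : (∑ x : F, lam r x)
      = ∑ x : F, (if tr x = 0 then (1 : ℤ) else -1) := rfl
  rw [this, Finset.sum_ite, Finset.sum_const, Finset.sum_const, card_tr r]
  simp

lemma fiber_card' (c α₀ : F) (h : α₀ ^ 2 + α₀ = c) :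
    (univ.filter (fun α : F => α ^ 2 + α = c)).card = 2 := by
  have hset : (univ.filter (fun α : F => α ^ 2 + α = c)) = {α₀, α₀ + 1} := by
    have h2 : (2 : F) = 0 := two_eq_zero r
    ext α
    simp only [mem_filter, mem_univ, true_and, mem_insert, mem_singleton]
    constructor
    · intro hα
      exact quad_solutions r α₀ α (by rw [hα, h])
    · rintro (rfl | rfl)
      · exact h
      · linear_combination h + (α₀ + 1) * h2
  rw [hset, card_insert_of_notMem (by simp [self_ne_add_one r α₀]), card_singleton]

lemma image_AS : Finset.image (fun α : F => α ^ 2 + α) univ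
    = univ.filter (fun x : F => tr x = 0) := by
  apply Finset.eq_of_subset_of_card_le
  · intro c hc
    obtain ⟨α, -, rfl⟩ := Finset.mem_image.mp hc
    simp only [mem_filter, mem_univ, true_and]
    rw [map_add, tr_sq]
    have : ∀ a : ZMod 2, a + a = 0 := by decide
    exact this _
  · have h1 : (univ.filter (fun x : F => tr x = 0)).card
        + (univ.filter (fun x : F => ¬ tr x = 0)).card = Fintype.card F := by
      rw [Finset.card_filter_add_card_filter_not, Finset.card_univ]
    have h2 : Fintype.card F = (∑ c ∈ Finset.image (fun α : F => α ^ 2 + α) univ,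
        (univ.filter (fun α : F => α ^ 2 + α = c)).card) := by
      rw [← Finset.card_univ]
      exact Finset.card_eq_sum_card_fiberwise
        (fun x _ => Finset.mem_image_of_mem _ (mem_univ x))
    have h3 : (∑ c ∈ Finset.image (fun α : F => α ^ 2 + α) univ,
        (univ.filter (fun α : F => α ^ 2 + α = c)).card)
        = 2 * (Finset.image (fun α : F => α ^ 2 + α) univ).card := by
      rw [Finset.sum_congr rfl (fun c hc => ?_), Finset.sum_const, smul_eq_mul, mul_comm]
      obtain ⟨α₀, -, hα₀⟩ := Finset.mem_image.mp hc
      exact fiber_card' r c α₀ hα₀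
    have h4 := card_tr r
    omega

lemma tr_b (b : F) (hb : ∀ α : F, α ^ 2 + α ≠ b) : ¬ tr b = 0 := by
  intro h0
  have : b ∈ univ.filter (fun x : F => tr x = 0) := by
    simp [h0]
  rw [← image_AS r] at this
  obtain ⟨α, -, hα⟩ := Finset.mem_image.mp this
  exact hb α hα

lemma image_g (b : F) (hb : ∀ α : F, α ^ 2 + α ≠ b) :
    Finset.image (fun α : F => α ^ 2 + α + b) univ
      = univ.filter (fun x : F => ¬ tr x = 0) := by
  have htrb := tr_b r b hb
  have hall : ∀ a : ZMod 2, a = 0 ∨ a = 1 := by decide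
  have h2 : (2 : F) = 0 := two_eq_zero r
  have hb1 : tr b = 1 := (hall _).resolve_left htrb
  ext y
  simp only [Finset.mem_image, mem_filter, mem_univ, true_and]
  constructor
  · rintro ⟨α, rfl⟩
    rw [map_add, map_add, tr_sq, hb1]
    have : ∀ a : ZMod 2, ¬ (a + a + 1 = 0) := by decide
    exact this _
  · intro hy
    have hyb : tr (y + b) = 0 := by
      rcases hall (tr y) with h | h
      · exact absurd h hy
      · rw [map_add, h, hb1]; decide
    have : y + b ∈ univ.filter (fun x : F => tr x = 0) := by simp [hyb]
    rw [← image_AS r] at this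
    obtain ⟨α, -, hα⟩ := Finset.mem_image.mp this
    exact ⟨α, by linear_combination hα + b * h2⟩

lemma lam_mul_eq (x z : F) :
    lam r x * lam r z = lam r z - 2 * (if ¬ tr x = 0 then lam r z else 0) := by
  unfold lam
  split_ifs <;> ring

end Aux

theorem stmt1 (r : ℕ) (hr : 1 ≤ r) (b : GaloisField 2 r)
    (hb : ∀ α : GaloisField 2 r, α ^ 2 + α ≠ b) (β : GaloisField 2 r) (hβ : β ≠ 0) :
    ∑ α : GaloisField 2 r, lam r (β / (α ^ 2 + α + b)) = -(Kl r β) - 1 := by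
  classical
  have h2F : (2 : GaloisField 2 r) = 0 := two_eq_zero r
  set S1 : ℤ := ∑ c ∈ univ.filter
      (fun x : GaloisField 2 r => ¬ Algebra.trace (ZMod 2) (GaloisField 2 r) x = 0),
      lam r (β * c⁻¹) with hS1
  have hLHS : ∑ α : GaloisField 2 r, lam r (β / (α ^ 2 + α + b)) = 2 * S1 := by
    rw [Finset.sum_comp (fun c : GaloisField 2 r => lam r (β / c))
      (fun α : GaloisField 2 r => α ^ 2 + α + b), image_g r b hb, hS1, Finset.mul_sum]
    apply Finset.sum_congr rfl
    intro c hc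
    have hc' : c ∈ Finset.image (fun α : GaloisField 2 r => α ^ 2 + α + b) univ := by
      rw [image_g r b hb]; exact hc
    obtain ⟨α₀, -, hα₀⟩ := Finset.mem_image.mp hc'
    have hcard : (univ.filter (fun α : GaloisField 2 r => α ^ 2 + α + b = c)).card = 2 := by
      have hfe : (univ.filter (fun α : GaloisField 2 r => α ^ 2 + α + b = c))
          = (univ.filter (fun α : GaloisField 2 r => α ^ 2 + α = c + b)) := by
        ext α
        simp only [mem_filter, mem_univ, true_and]
        constructor
        · intro h; linear_combination h - b * h2F
        · intro h; linear_combination h + b * h2F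
      rw [hfe]
      exact fiber_card' r (c + b) α₀ (by linear_combination hα₀ - b * h2F)
    rw [hcard, div_eq_mul_inv, nsmul_eq_mul]
    norm_num
  have hT : ∑ x ∈ (univ \ {0} : Finset (GaloisField 2 r)), lam r (β * x⁻¹) = -1 := by
    rw [Finset.sum_sdiff_eq_sub (Finset.subset_univ _), Finset.sum_singleton]
    have h1 : ∑ x : GaloisField 2 r, lam r (β * x⁻¹) = ∑ y : GaloisField 2 r, lam r y := by
      apply Finset.sum_nbij' (i := fun x : GaloisField 2 r => β * x⁻¹)
        (j := fun y : GaloisField 2 r => β * y⁻¹)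
      · intros; exact mem_univ _
      · intros; exact mem_univ _
      · intro x _
        by_cases hx : x = 0
        · simp [hx]
        · field_simp
      · intro y _
        by_cases hy : y = 0
        · simp [hy]
        · field_simp
      · intro x _; rfl
    rw [h1, sum_lam r]
    simp [lam_zero]
  have hKl : Kl r β = -1 - 2 * S1 := by
    unfold Kl
    rw [Finset.sum_congr rfl (fun x _ => by
      rw [lam_add r, lam_mul_eq r])]
    rw [Finset.sum_sub_distrib, hT, ← Finset.mul_sum, ← Finset.sum_filter]
    have hfil : (univ \ {0} : Finset (GaloisField 2 r)).filter
        (fun x => ¬ Algebra.trace (ZMod 2) (GaloisField 2 r) x = 0)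
        = univ.filter (fun x => ¬ Algebra.trace (ZMod 2) (GaloisField 2 r) x = 0) := by
      ext x
      simp only [mem_filter, mem_sdiff, mem_univ, mem_singleton, true_and]
      constructor
      · tauto
      · intro hx; exact ⟨fun h0 => hx (by rw [h0, map_zero]), hx⟩
    rw [hfil, ← hS1]
  rw [hLHS, hKl]
  ring
end

section
/- For integers t ≥ 2, q a prime power, ψ a nontrivial additive character of F_q, and a ∈ F_q*, the Kloosterman sum for GL satisfies the recursion K_{GL(t,q)}(ψ;a) = q^{t−1} K_{GL(t−1,q)}(ψ;a) K(ψ;a) + q^{2t−2}(q^{t−1}−1) K_{GL(t−2,q)}(ψ;a), where K_{GL(t,q)}(ψ;a) = Σ_{w ∈ GL(t,q)} ψ(Tr w + a Tr w⁻¹) and K_{GL(0,q)}(ψ;a) = 1. -/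
/-!
Split `GL(t, q)` according to the last row `ρ` of `g`.

If `ρ = d • e_t`, then `g` is block upper triangular with diagonal blocks `A ∈ GL(t-1, q)` and `d`,
plus a free column; the phase `ψ (Tr g + a Tr g⁻¹)` factors as the phase of `A` times
`ψ (d + a d⁻¹)`, which gives `q^(t-1) K_{GL(t-1)} K(ψ; a)`.

Otherwise, conjugating by an invertible matrix whose last row is `e_t` keeps the phase and sends
`ρ` to `ρ s`, and these `ρ s` exhaust all rows outside `F e_t`. So each of the `q^t - q` such rows
contributes as much as `ρ = e_(t-1)`. Swapping the last two columns makes such a `g` block upper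
triangular with blocks `M ∈ GL(t-1, q)` and `1`, and a free column `w`. The phase becomes linear
in `w`, so summing over `w` leaves `q^(t-1)` times the sum over the `M` whose last row is
`a • e_(t-1)`. Those `M` are again block triangular, which gives `q^(2t-3) K_{GL(t-2)}`.
-/

open Finset
open scoped Classical

/-- The Kloosterman sum for `GL(t,q)`:
`K_{GL(t,q)}(ψ;a) = Σ_{w ∈ GL(t,q)} ψ(Tr w + a Tr w⁻¹)`.
For `t = 0` the group is trivial and the sum is `ψ(0) = 1`. -/
noncomputable def KGL (p r : ℕ) [Fact p.Prime] (ψ : AddChar (GaloisField p r) ℂ)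
    (t : ℕ) (a : GaloisField p r) : ℂ :=
  ∑ w : Matrix.GeneralLinearGroup (Fin t) (GaloisField p r),
    ψ ((w : Matrix (Fin t) (Fin t) (GaloisField p r)).trace +
      a * ((w⁻¹ : Matrix.GeneralLinearGroup (Fin t) (GaloisField p r)) :
        Matrix (Fin t) (Fin t) (GaloisField p r)).trace)

open Matrix Sum

lemma Matrix.det_updateRow_one {n R : Type*} [Fintype n] [DecidableEq n] [CommRing R] (j : n)
    (ρ : n → R) : ((1 : Matrix n n R).updateRow j ρ).det = ρ j := by
  have hρ : ∑ k, ρ k • (1 : Matrix n n R) k = ρ := by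
    ext i
    simp [Finset.sum_apply, one_apply]
  simpa [hρ] using det_updateRow_sum (1 : Matrix n n R) j ρ

lemma Matrix.eq_fromBlocks_of_row_eq_single {ι R : Type*} [DecidableEq ι] [Zero R]
    {g : Matrix (ι ⊕ Unit) (ι ⊕ Unit) R} {d : R}
    (h : g (inr ()) = Pi.single (inr ()) d) :
    g = fromBlocks g.toBlocks₁₁ (replicateCol Unit fun i => g (inl i) (inr ())) 0
      (diagonal fun _ => d) := by
  ext (i | ⟨⟩) (j | ⟨⟩) <;> simp [toBlocks₁₁, h]

lemma Matrix.trace_fromBlocks {m n R : Type*} [Fintype m] [Fintype n] [AddCommMonoid R]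
    (A : Matrix m m R) (B : Matrix m n R) (C : Matrix n m R) (D : Matrix n n R) :
    trace (fromBlocks A B C D) = trace A + trace D := by
  simp [trace, Fintype.sum_sum_type]

lemma Matrix.sub_smul_inv_row_eq_zero_iff {n R : Type*} [Fintype n] [DecidableEq n] [CommRing R]
    (a : R) {M : Matrix n n R} (hM : IsUnit M) (i : n) :
    Pi.single i 1 - a • M⁻¹ i = 0 ↔ M i = Pi.single i a := by
  have row_eq (N : Matrix n n R) : N i = Pi.single i 1 ᵥ* N := (single_one_vecMul i N).symm
  rw [sub_eq_zero, ← (vecMul_injective_of_isUnit hM).eq_iff, smul_vecMul, row_eq M⁻¹, vecMul_vecMul,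
    nonsing_inv_mul M ((isUnit_iff_isUnit_det M).1 hM), vecMul_one, ← row_eq]
  simp [← Pi.single_smul]

lemma Matrix.inv_fromBlocks_zero₂₁_diagonal {ι K : Type*} [Fintype ι] [DecidableEq ι] [Field K]
    {A : Matrix ι ι K} (hA : IsUnit A) {d : K} (hd : d ≠ 0)
    (B : Matrix ι Unit K) :
    (fromBlocks A B 0 (diagonal fun _ => d))⁻¹ =
      fromBlocks A⁻¹ (-(d⁻¹ • (A⁻¹ * B))) 0 (diagonal fun _ => d⁻¹) := by
  rw [inv_fromBlocks_zero₂₁_of_isUnit_iff _ _ _ (iff_of_true hA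
    (isUnit_diagonal.2 (Pi.isUnit_iff.2 fun _ => hd.isUnit))), inv_subsingleton (diagonal _)]
  ext (i | i) (j | j) <;> simp [mul_comm]

variable {F : Type*} [Field F] [Fintype F] [DecidableEq F]

lemma sum_addChar_dotProduct {ι : Type*} [Fintype ι] [DecidableEq ι] {ψ : AddChar F ℂ}
    (hψ : ψ ≠ 1) (c : ι → F) :
    ∑ v : ι → F, ψ (c ⬝ᵥ v) = if c = 0 then (Fintype.card F : ℂ) ^ Fintype.card ι else 0 := by
  let χ : AddChar (ι → F) ℂ := ψ.compAddMonoidHom (AddMonoidHom.mk' (c ⬝ᵥ ·) (dotProduct_add c))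
  have hχ : χ = 0 ↔ c = 0 := by
    refine ⟨fun h => ?_, fun h => by ext v; simp [χ, h]⟩
    by_contra! hc
    obtain ⟨i, hi⟩ := Function.ne_iff.1 hc
    obtain ⟨y, hy⟩ := AddChar.ne_one_iff.1 hψ
    have : χ (Pi.single i (y / c i)) = ψ y := by simp [χ, dotProduct_single, mul_div_cancel₀ _ hi]
    exact hy (by rw [← this, h, AddChar.zero_apply])
  rw [show ∑ v, ψ (c ⬝ᵥ v) = ∑ v, χ v from rfl, χ.sum_eq_ite]
  simp only [hχ, Fintype.card_fun, Nat.cast_pow]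

section Kloosterman

variable (ψ : AddChar F ℂ) (a : F)

noncomputable def kloostermanSum (n : Type*) [Fintype n] [DecidableEq n] : ℂ :=
  ∑ g ∈ univ.filter (fun g : Matrix n n F => IsUnit g), ψ (trace g + a * trace g⁻¹)

lemma kloostermanSum_eq_sum_GL (n : Type*) [Fintype n] [DecidableEq n] :
    kloostermanSum ψ a n =
      ∑ g : GL n F, ψ (trace (g : Matrix n n F) + a * trace ((g⁻¹ : GL n F) : Matrix n n F)) := by
  symm
  refine sum_bij (fun g _ => (g : Matrix n n F)) (by simp) (fun g _ h _ => Units.ext)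
    (fun g hg => ⟨(mem_filter.1 hg).2.unit, mem_univ _, rfl⟩) (fun g _ => ?_)
  rw [coe_units_inv]

lemma kloostermanSum_congr {m n : Type*} [Fintype m] [DecidableEq m] [Fintype n] [DecidableEq n]
    (e : m ≃ n) : kloostermanSum ψ a m = kloostermanSum ψ a n := by
  have trace_reindex (g : Matrix m m F) : trace (reindex e e g) = trace g :=
    Fintype.sum_equiv e.symm _ _ fun _ => rfl
  refine sum_equiv (reindex e e) (fun g => by simp [isUnit_submatrix_equiv]) fun g _ => ?_
  rw [show (reindex e e g)⁻¹ = reindex e e g⁻¹ from inv_submatrix_equiv _ _ _, trace_reindex,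
    trace_reindex]

end Kloosterman

section RowFibers

variable (ψ : AddChar F ℂ) (a : F) {n : Type*} [Fintype n] [DecidableEq n]

noncomputable def rowFiberSum (l : n) (ρ : n → F) : ℂ :=
  ∑ g ∈ univ.filter (fun g : Matrix n n F => IsUnit g ∧ g l = ρ), ψ (trace g + a * trace g⁻¹)

lemma sum_rowFiberSum (l : n) : ∑ ρ, rowFiberSum ψ a l ρ = kloostermanSum ψ a n := by
  simp only [rowFiberSum, kloostermanSum, ← filter_filter]
  exact sum_fiberwise _ _ _

lemma rowFiberSum_vecMul (s : GL n F) {l : n} (hs : (s : Matrix n n F) l = Pi.single l 1)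
    (ρ : n → F) : rowFiberSum ψ a l (ρ ᵥ* ↑s) = rowFiberSum ψ a l ρ := by
  have row_eq (M : Matrix n n F) : M l = Pi.single l 1 ᵥ* M := (single_one_vecMul l M).symm
  have hs' : Pi.single l 1 ᵥ* (↑s⁻¹ : Matrix n n F) = Pi.single l 1 := by
    conv_lhs => rw [← hs, row_eq (s : Matrix n n F), vecMul_vecMul, ← Units.val_mul,
      mul_inv_cancel, Units.val_one, vecMul_one]
  have hrow (g : Matrix n n F) :
      ((↑s⁻¹ : Matrix n n F) * g * (s : Matrix n n F)) l = g l ᵥ* ↑s := by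
    rw [row_eq (_ * _), ← vecMul_vecMul, ← vecMul_vecMul, hs', ← row_eq]
  symm
  refine sum_equiv ((Units.mulRight s).trans (Units.mulLeft s⁻¹)) (fun g => ?_) fun g _ => ?_
  · simp only [mem_filter, mem_univ, true_and, Equiv.trans_apply, Units.mulRight_apply,
      Units.mulLeft_apply, ← Matrix.mul_assoc, hrow, Units.isUnit_units_mul,
      Units.isUnit_mul_units, (vecMul_injective_of_isUnit s.isUnit).eq_iff]
  · simp only [Equiv.trans_apply, Units.mulRight_apply, Units.mulLeft_apply, ← Matrix.mul_assoc,
      Matrix.mul_inv_rev, ← coe_units_inv, inv_inv, trace_units_conj']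

lemma rowFiberSum_eq_single_of_apply_ne_zero {l j : n} (hjl : j ≠ l) {ρ : n → F} (hρ : ρ j ≠ 0) :
    rowFiberSum ψ a l ρ = rowFiberSum ψ a l (Pi.single j 1) := by
  let s := GeneralLinearGroup.mkOfDetNeZero _ ((det_updateRow_one j ρ).trans_ne hρ)
  have hs : (s : Matrix n n F) l = Pi.single l 1 := by
    ext k
    simp [s, updateRow_ne hjl.symm, one_eq_pi_single]
  have hρs : Pi.single j 1 ᵥ* (s : Matrix n n F) = ρ := by
    rw [single_one_vecMul]
    exact updateRow_self
  rw [← rowFiberSum_vecMul ψ a s hs (Pi.single j 1), hρs]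

lemma rowFiberSum_single_eq_single {l j k : n} (hjl : j ≠ l) (hkl : k ≠ l) :
    rowFiberSum ψ a l (Pi.single j 1) = rowFiberSum ψ a l (Pi.single k 1) := by
  let w : n → F := Function.update (Pi.single k 1) j 1
  have hwj : w j ≠ 0 := by simp [w]
  have hwk : w k ≠ 0 := by by_cases hkj : k = j <;> simp [w, hkj]
  rw [← rowFiberSum_eq_single_of_apply_ne_zero ψ a hjl hwj,
    rowFiberSum_eq_single_of_apply_ne_zero ψ a hkl hwk]

lemma rowFiberSum_zero (l : n) : rowFiberSum ψ a l 0 = 0 := by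
  rw [rowFiberSum, filter_false_of_mem, sum_empty]
  rintro g - ⟨hg, hrow⟩
  exact (isUnit_iff_isUnit_det g).1 hg |>.ne_zero (det_eq_zero_of_row_eq_zero l (congrFun hrow))

end RowFibers

section BlockTriangular

variable {ι : Type*} [Fintype ι] [DecidableEq ι]

lemma sum_isUnit_row_eq_single {d : F} (hd : d ≠ 0) (f : Matrix (ι ⊕ Unit) (ι ⊕ Unit) F → ℂ) :
    ∑ g ∈ univ.filter (fun g => IsUnit g ∧ g (inr ()) = Pi.single (inr ()) d), f g =
      ∑ A ∈ univ.filter (fun A : Matrix ι ι F => IsUnit A), ∑ b : ι → F,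
        f (fromBlocks A (replicateCol Unit b) 0 (diagonal fun _ => d)) := by
  rw [← sum_product']
  refine sum_nbij' (fun g => (g.toBlocks₁₁, fun i => g (inl i) (inr ())))
    (fun p => fromBlocks p.1 (replicateCol Unit p.2) 0 (diagonal fun _ => d)) ?_ ?_ ?_ ?_ ?_
  · rintro g hg
    simp only [mem_filter, mem_univ, true_and] at hg
    rw [eq_fromBlocks_of_row_eq_single hg.2, isUnit_fromBlocks_zero₂₁] at hg
    simpa using hg.1.1
  · rintro ⟨A, b⟩ hp
    simp only [mem_product, mem_filter, mem_univ, true_and, and_true] at hp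
    simp only [mem_filter, mem_univ, true_and, isUnit_fromBlocks_zero₂₁]
    refine ⟨⟨hp, isUnit_diagonal.2 (Pi.isUnit_iff.2 fun _ => hd.isUnit)⟩, ?_⟩
    ext (j | ⟨⟩) <;> simp
  · rintro g hg
    exact (eq_fromBlocks_of_row_eq_single (mem_filter.1 hg).2.2).symm
  · rintro ⟨A, b⟩ -
    simp
  · rintro g hg
    exact congrArg f (eq_fromBlocks_of_row_eq_single (mem_filter.1 hg).2.2)

variable (ψ : AddChar F ℂ) (a : F)

lemma rowFiberSum_single_inr {d : F} (hd : d ≠ 0) :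
    rowFiberSum ψ a (inr ()) (Pi.single (inr ()) d : ι ⊕ Unit → F) =
      (Fintype.card F : ℂ) ^ Fintype.card ι * kloostermanSum ψ a ι * ψ (d + a * d⁻¹) := by
  simp only [rowFiberSum, kloostermanSum, sum_isUnit_row_eq_single hd, sum_mul, mul_sum]
  refine sum_congr rfl fun A hA => ?_
  simp only [inv_fromBlocks_zero₂₁_diagonal (mem_filter.1 hA).2 hd, trace_fromBlocks,
    trace_diagonal, univ_unique, sum_singleton]
  rw [sum_const, card_univ, Fintype.card_fun, nsmul_eq_mul, mul_assoc, ← AddChar.map_add_eq_mul]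
  push_cast
  congr 2
  ring

end BlockTriangular

section BigCell

variable {κ : Type*} [Fintype κ] [DecidableEq κ] (ψ : AddChar F ℂ) (a : F)

lemma rowFiberSum_single_inl_inr_eq_sum :
    rowFiberSum ψ a (inr ()) (Pi.single (inl (inr ())) 1 : (κ ⊕ Unit) ⊕ Unit → F) =
      ∑ M ∈ univ.filter (fun M : Matrix (κ ⊕ Unit) (κ ⊕ Unit) F => IsUnit M), ∑ b : κ ⊕ Unit → F,
        ψ (trace M.toBlocks₁₁ + a * trace M⁻¹.toBlocks₁₁) *
          ψ ((Pi.single (inr ()) 1 - a • M⁻¹ (inr ())) ⬝ᵥ b) := by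
  let σ : Equiv.Perm ((κ ⊕ Unit) ⊕ Unit) := Equiv.swap (inl (inr ())) (inr ())
  have hswap : rowFiberSum ψ a (inr ()) (Pi.single (inl (inr ())) 1 : (κ ⊕ Unit) ⊕ Unit → F) =
      ∑ h ∈ univ.filter (fun h : Matrix ((κ ⊕ Unit) ⊕ Unit) ((κ ⊕ Unit) ⊕ Unit) F =>
        IsUnit h ∧ h (inr ()) = Pi.single (inr ()) 1),
        ψ (trace (h.submatrix id σ) + a * trace (h⁻¹.submatrix σ id)) := by
    symm
    refine sum_equiv (reindex (Equiv.refl _) σ) (fun h => ?_) (fun h _ => ?_)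
    · have hσ :
          (Pi.single (inr ()) 1 : (κ ⊕ Unit) ⊕ Unit → F) ∘ σ = Pi.single (inl (inr ())) 1 := by
        ext j
        simp [σ, Pi.single_apply, Equiv.swap_apply_eq_iff]
      simp only [mem_filter, mem_univ, true_and, reindex_apply, isUnit_submatrix_equiv,
        and_congr_right_iff]
      intro _
      change _ ↔ h (inr ()) ∘ σ.symm = _
      rw [← hσ, Equiv.symm_swap, σ.surjective.injective_comp_right.eq_iff]
    · simp only [reindex_apply, Equiv.refl_symm, Equiv.coe_refl, σ, Equiv.symm_swap]
      rw [← Equiv.coe_refl, inv_submatrix_equiv]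
  rw [hswap, sum_isUnit_row_eq_single one_ne_zero]
  refine sum_congr rfl fun M hM => sum_congr rfl fun b _ => ?_
  rw [inv_fromBlocks_zero₂₁_diagonal (mem_filter.1 hM).2 one_ne_zero, ← AddChar.map_add_eq_mul]
  congr 1
  simp only [trace, diagonal_one, diag_apply, submatrix_apply, id_eq, Fintype.sum_sum_type, ne_eq,
    inl.injEq, reduceCtorEq, not_false_eq_true, Equiv.swap_apply_of_ne_of_ne, fromBlocks_apply₁₁,
    univ_unique, PUnit.default_eq_unit, Equiv.swap_apply_left, fromBlocks_apply₁₂,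
    replicateCol_apply, sum_singleton, Equiv.swap_apply_right, fromBlocks_apply₂₁,
    Matrix.zero_apply, sum_const_zero, add_zero, inv_one, one_smul, Matrix.neg_apply, mul_apply,
    neg_add_rev, sum_const, card_singleton, smul_add, smul_neg, toBlocks₁₁, of_apply, dotProduct,
    Pi.sub_apply, Pi.smul_apply, smul_eq_mul, Pi.single_eq_of_ne, zero_sub, neg_mul,
    sum_neg_distrib, Pi.single_eq_same, σ]
  simp only [mul_assoc, ← mul_sum]
  ring

lemma rowFiberSum_single_inl_inr (hψ : ψ ≠ 1) (ha : a ≠ 0) :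
    rowFiberSum ψ a (inr ()) (Pi.single (inl (inr ())) 1 : (κ ⊕ Unit) ⊕ Unit → F) =
      (Fintype.card F : ℂ) ^ (Fintype.card κ + 1) *
        ((Fintype.card F : ℂ) ^ Fintype.card κ * kloostermanSum ψ a κ) := by
  let q : ℂ := Fintype.card F
  calc rowFiberSum ψ a (inr ()) (Pi.single (inl (inr ())) 1 : (κ ⊕ Unit) ⊕ Unit → F)
      = ∑ M ∈ univ.filter (fun M : Matrix (κ ⊕ Unit) (κ ⊕ Unit) F => IsUnit M),
          if M (inr ()) = Pi.single (inr ()) a then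
            q ^ (Fintype.card κ + 1) * ψ (trace M.toBlocks₁₁ + a * trace M⁻¹.toBlocks₁₁)
          else 0 := by
        rw [rowFiberSum_single_inl_inr_eq_sum]
        refine sum_congr rfl fun M hM => ?_
        rw [← mul_sum, sum_addChar_dotProduct hψ]
        simp only [sub_smul_inv_row_eq_zero_iff a (mem_filter.1 hM).2]
        split_ifs <;> simp [q, mul_comm]
    _ = q ^ (Fintype.card κ + 1) *
          ∑ M ∈ univ.filter (fun M : Matrix (κ ⊕ Unit) (κ ⊕ Unit) F =>
            IsUnit M ∧ M (inr ()) = Pi.single (inr ()) a),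
            ψ (trace M.toBlocks₁₁ + a * trace M⁻¹.toBlocks₁₁) := by
        rw [← sum_filter, filter_filter, mul_sum]
    _ = q ^ (Fintype.card κ + 1) * (q ^ Fintype.card κ * kloostermanSum ψ a κ) := by
        rw [sum_isUnit_row_eq_single ha, kloostermanSum]
        congr 1
        rw [mul_sum]
        refine sum_congr rfl fun A hA => ?_
        simp [inv_fromBlocks_zero₂₁_diagonal (mem_filter.1 hA).2 ha, q]

theorem kloostermanSum_sum_unit_sum_unit (hψ : ψ ≠ 1) (ha : a ≠ 0) :
    kloostermanSum ψ a ((κ ⊕ Unit) ⊕ Unit) =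
      (Fintype.card F : ℂ) ^ (Fintype.card κ + 1) * kloostermanSum ψ a (κ ⊕ Unit) *
          ∑ x ∈ univ \ {0}, ψ (x + a * x⁻¹) +
        (Fintype.card F : ℂ) ^ (2 * Fintype.card κ + 2) *
          ((Fintype.card F : ℂ) ^ (Fintype.card κ + 1) - 1) * kloostermanSum ψ a κ := by
  let q : ℂ := Fintype.card F
  have hblock : ∑ d : Unit → F, rowFiberSum ψ a (inr ()) (Sum.elim (0 : κ ⊕ Unit → F) d) =
      q ^ (Fintype.card κ + 1) * kloostermanSum ψ a (κ ⊕ Unit) *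
        ∑ x ∈ univ \ {0}, ψ (x + a * x⁻¹) := by
    have hd (d : Unit → F) : Sum.elim (0 : κ ⊕ Unit → F) d = Pi.single (inr ()) (d ()) := by
      ext (i | ⟨⟩) <;> simp
    simp_rw [hd]
    rw [Fintype.sum_equiv (Equiv.funUnique Unit F)
        (fun d => rowFiberSum ψ a (inr ()) (Pi.single (inr ()) (d ())))
        (fun d => rowFiberSum ψ a (inr ()) (Pi.single (inr ()) d)) fun _ => rfl,
      sum_eq_sum_sdiff_singleton_add (mem_univ 0), Pi.single_zero, rowFiberSum_zero, add_zero,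
      mul_sum]
    refine sum_congr rfl fun x hx => ?_
    rw [rowFiberSum_single_inr ψ a (by simpa using hx)]
    simp [q]
  have hbig (v : κ ⊕ Unit → F) (hv : v ≠ 0) :
      ∑ d : Unit → F, rowFiberSum ψ a (inr ()) (Sum.elim v d) =
        q * rowFiberSum ψ a (inr ()) (Pi.single (inl (inr ())) 1 : (κ ⊕ Unit) ⊕ Unit → F) := by
    obtain ⟨j, hj⟩ := Function.ne_iff.1 hv
    have hfiber (d : Unit → F) : rowFiberSum ψ a (inr ()) (Sum.elim v d) =
        rowFiberSum ψ a (inr ()) (Pi.single (inl (inr ())) 1 : (κ ⊕ Unit) ⊕ Unit → F) :=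
      (rowFiberSum_eq_single_of_apply_ne_zero ψ a inl_ne_inr hj).trans
        (rowFiberSum_single_eq_single ψ a inl_ne_inr inl_ne_inr)
    simp [hfiber, q]
  rw [← sum_rowFiberSum ψ a (inr ()), Fintype.sum_equiv (Equiv.sumArrowEquivProdArrow _ _ F) _
      (fun p => rowFiberSum ψ a (inr ()) (Sum.elim p.1 p.2))
      fun ρ => congrArg _ (Sum.elim_comp_inl_inr ρ).symm,
    Fintype.sum_prod_type, ← add_sum_erase _ _ (mem_univ 0)]
  rw [hblock, sum_congr rfl fun v hv => hbig v (ne_of_mem_erase hv), sum_const,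
    card_erase_of_mem (mem_univ _), card_univ, Fintype.card_fun, nsmul_eq_mul,
    Nat.cast_pred (pow_pos Fintype.card_pos _), rowFiberSum_single_inl_inr ψ a hψ ha]
  simp only [Fintype.card_sum, Fintype.card_unit, Nat.cast_pow, q]
  ring

end BigCell

theorem stmt5 (p r : ℕ) [Fact p.Prime] (hr : 1 ≤ r)
    (ψ : AddChar (GaloisField p r) ℂ) (hψ : ψ ≠ 1)
    (a : GaloisField p r) (ha : a ≠ 0) (t : ℕ) (ht : 2 ≤ t) :
    KGL p r ψ t a =
      ((p : ℂ) ^ r) ^ (t - 1) * KGL p r ψ (t - 1) a *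
        (∑ x ∈ (Finset.univ \ {0} : Finset (GaloisField p r)), ψ (x + a * x⁻¹)) +
      ((p : ℂ) ^ r) ^ (2 * t - 2) * (((p : ℂ) ^ r) ^ (t - 1) - 1) * KGL p r ψ (t - 2) a := by
  obtain ⟨n, rfl⟩ : ∃ n, t = n + 2 := ⟨t - 2, by omega⟩
  have hq : (Fintype.card (GaloisField p r) : ℂ) = (p : ℂ) ^ r := by
    rw [← Nat.card_eq_fintype_card, GaloisField.card p r (by omega), Nat.cast_pow]
  have hKGL (k : ℕ) : KGL p r ψ k a = kloostermanSum ψ a (Fin k) :=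
    (kloostermanSum_eq_sum_GL ψ a (Fin k)).symm
  let e₁ : Fin n ⊕ Unit ≃ Fin (n + 1) :=
    (Equiv.sumCongr (Equiv.refl _) finOneEquiv.symm).trans finSumFinEquiv
  let e₂ : (Fin n ⊕ Unit) ⊕ Unit ≃ Fin (n + 2) :=
    (Equiv.sumCongr e₁ finOneEquiv.symm).trans finSumFinEquiv
  rw [hKGL, hKGL, hKGL, show n + 2 - 1 = n + 1 by omega, show n + 2 - 2 = n by omega,
    show 2 * (n + 2) - 2 = 2 * n + 2 by omega, ← kloostermanSum_congr ψ a e₁,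
    ← kloostermanSum_congr ψ a e₂, kloostermanSum_sum_unit_sum_unit ψ a hψ ha, Fintype.card_fin, hq]
end
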